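/- Let h ≥ 1, let X ⊆ B^h, let G = Q_h(X), and let x, y ∈ \widehat X with x ≠ y. If u, v ∈ V(G) satisfy u ≤ x, v ≤ y, u ∉ I_G(0^h,x) ∩ I_G(0^h,y) and v ∉ I_G(0^h,x) ∩ I_G(0^h,y) (equivalently: u ≤ x but not u ≤ y, and v ≤ y but not v ≤ x), then u and v are not adjacent in G. -/

import Mathlib

open SimpleGraph

/-- The hypercube `Q_h` on binary words of length `h`: two words are adjacent
iff their Hamming distance is `1`. -/
def Qcube (h : ℕ) : SimpleGraph (Fin h → Bool) where
  Adj u v := hammingDist u v = 1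
  symm := ⟨fun (u v : Fin h → Bool) huv => by
    have huv' : hammingDist u v = 1 := huv
    show hammingDist v u = 1
    rwa [hammingDist_comm]⟩
  loopless := ⟨fun u hu => by
    have hu' : hammingDist u u = 1 := hu
    simp only [hammingDist_self] at hu'; exact absurd hu' (by norm_num)⟩

/-- Vertex set of the daisy cube `Q_h(X)`: all words below some element of `X`. -/
def daisyVerts {h : ℕ} (X : Set (Fin h → Bool)) : Set (Fin h → Bool) :=
  {v | ∃ x ∈ X, v ≤ x}

/-- The daisy cube `Q_h(X)`, the subgraph of `Q_h` induced by `daisyVerts X`. -/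
def daisyGraph {h : ℕ} (X : Set (Fin h → Bool)) : SimpleGraph (daisyVerts X) :=
  SimpleGraph.induce (daisyVerts X) (Qcube h)

/-- `\widehat X`: the set of maximal elements of the poset `(X, ≤)`. -/
def maxSet {h : ℕ} (X : Set (Fin h → Bool)) : Set (Fin h → Bool) :=
  {x ∈ X | ∀ y ∈ X, x ≤ y → x = y}

/-- The all-zeros word `0^h`. -/
def zeroW (h : ℕ) : Fin h → Bool := fun _ => false

/-- Bitwise XOR of words. -/
def xorW {h : ℕ} (u v : Fin h → Bool) : Fin h → Bool := fun i => xor (u i) (v i)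

/-- Bitwise AND of words. -/
def andW {h : ℕ} (u v : Fin h → Bool) : Fin h → Bool := fun i => u i && v i

/-- The weight `w(u)`: the number of ones of a word. -/
def weightW {h : ℕ} (u : Fin h → Bool) : ℕ :=
  (Finset.univ.filter fun i => u i = true).card

/-- The interval `I_G(u,v)`: vertices lying on shortest `u,v`-paths. -/
def gInterval {V : Type*} (G : SimpleGraph V) (u v : V) : Set V :=
  {w | G.dist u w + G.dist w v = G.dist u v}

/-- `N^u(v)`: neighbors of `v` that are closer to `u` than `v` is. -/
def lowerNbrs {V : Type*} (G : SimpleGraph V) (u v : V) : Set V :=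
  {z | G.Adj v z ∧ G.dist u z + 1 = G.dist u v}

/-- `α` is an isometric embedding of `G` into `Q_h`. -/
def IsIsomEmb {V : Type*} (G : SimpleGraph V) {h : ℕ} (α : V → Fin h → Bool) : Prop :=
  ∀ a b, hammingDist (α a) (α b) = G.dist a b

/-- `α` is a proper embedding of `G` into `Q_h`: an isometric embedding such that
`G` is isomorphic to the daisy cube generated by the image of `α`. -/
def IsProperEmb {V : Type*} (G : SimpleGraph V) {h : ℕ} (α : V → Fin h → Bool) : Prop :=
  IsIsomEmb G α ∧ Nonempty (G ≃g daisyGraph (Set.range α))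

/-- `v` is a minimal vertex of `G`: some proper embedding sends `v` to `0^h`. -/
def IsMinVertex {V : Type*} (G : SimpleGraph V) (h : ℕ) (v : V) : Prop :=
  ∃ α : V → Fin h → Bool, IsProperEmb G α ∧ α v = zeroW h

/-- The labeling conditions of Proposition `cubes`/Lemma `partial`: `α v = 0^h`,
the neighbors of `v` get pairwise distinct weight-one labels, and every other
vertex gets the bitwise OR of the labels of its down-neighbors. -/
def goodLabeling {V : Type*} (G : SimpleGraph V) {h : ℕ} (v : V)
    (α : V → Fin h → Bool) : Prop :=
  α v = zeroW h ∧
  Set.InjOn α (G.neighborSet v) ∧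
  (∀ z ∈ G.neighborSet v, weightW (α z) = 1) ∧
  (∀ u ∉ insert v (G.neighborSet v),
    ∀ i, α u i = true ↔ ∃ z ∈ lowerNbrs G v u, α z i = true)


/-- Let `x ≠ y` be maximal elements of `X`. If `u ≤ x` but not
`u ≤ y`, and `v ≤ y` but not `v ≤ x`, then `u` and `v` are not adjacent in the
daisy cube `Q_h(X)` (equivalently, in `Q_h`). -/
theorem stmt_9 (h : ℕ) (hh : 1 ≤ h) (X : Set (Fin h → Bool))
    (x y : Fin h → Bool) (hx : x ∈ maxSet X) (hy : y ∈ maxSet X) (hxy : x ≠ y)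
    (u v : Fin h → Bool) (hux : u ≤ x) (hvy : v ≤ y)
    (huy : ¬ u ≤ y) (hvx : ¬ v ≤ x) :
    ¬ (Qcube h).Adj u v := by
  intro hadj
  have hdist : hammingDist u v = 1 := hadj
  obtain ⟨i, hi⟩ : ∃ i, ¬ u i ≤ y i := by
    by_contra hc; push_neg at hc; exact huy fun i => hc i
  obtain ⟨j, hj⟩ : ∃ j, ¬ v j ≤ x j := by
    by_contra hc; push_neg at hc; exact hvx fun j => hc j
  have hui : u i = true := by revert hi; cases u i <;> simp
  have hyi : y i = false := by revert hi; cases y i <;> simp [hui]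
  have hvj : v j = true := by revert hj; cases v j <;> simp
  have hxj : x j = false := by revert hj; cases x j <;> simp [hvj]
  have hvi : v i = false := by have := hvy i; rw [hyi] at this; revert this; cases v i <;> simp
  have huj : u j = false := by have := hux j; rw [hxj] at this; revert this; cases u j <;> simp
  have hij : i ≠ j := by intro e; rw [e, huj] at hui; exact Bool.false_ne_true hui
  have h2 : 2 ≤ hammingDist u v := by
    have : ({i, j} : Finset (Fin h)) ⊆ Finset.univ.filter (fun k => u k ≠ v k) := by
      intro k hk
      simp only [Finset.mem_insert, Finset.mem_singleton] at hk
      rcases hk with rfl | rfl <;> simp_all [Finset.mem_filter]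
    have hc2 : ({i, j} : Finset (Fin h)).card = 2 := by
      rw [Finset.card_insert_of_notMem (by simpa using hij), Finset.card_singleton]
    calc 2 = ({i, j} : Finset (Fin h)).card := hc2.symm
    _ ≤ (Finset.univ.filter (fun k => u k ≠ v k)).card := Finset.card_le_card this
    _ = hammingDist u v := by rw [hammingDist]
  omega
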